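/- Let Δ be the derivation on noncommutative power series in a, b (valued in series in a, b, t) determined by Δ(a) = Δ(b) = t, Δ(1) = 0, and the Leibniz rule. Then the matrix Ψ of ab-series of a level poset is the unique matrix power series solution of the system: Ψ|_{a=t, b=0} = K(t) and Δ(Ψ) = Ψ · t · Ψ (applied entrywise). -/

import Mathlib

noncomputable section

/-- The free (noncommutative) algebra `ℝ⟨a,b⟩`; `true` encodes `a`, `false` encodes `b`. -/
abbrev NCab : Type := FreeAlgebra ℝ Bool

/-- The free algebra `ℝ⟨a,b,t⟩`: `0 ↦ a`, `1 ↦ b`, `2 ↦ t`. -/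
abbrev NCabt : Type := FreeAlgebra ℝ (Fin 3)

def va : NCab := FreeAlgebra.ι ℝ true
def vb : NCab := FreeAlgebra.ι ℝ false
def va' : NCabt := FreeAlgebra.ι ℝ 0
def vb' : NCabt := FreeAlgebra.ι ℝ 1
def vt : NCabt := FreeAlgebra.ι ℝ 2

/-- The inclusion `ℝ⟨a,b⟩ → ℝ⟨a,b,t⟩`. -/
def embed : NCab →ₐ[ℝ] NCabt :=
  FreeAlgebra.lift ℝ (fun g => if g then va' else vb')

/-- The substitution `a ↦ t`, `b ↦ 0`. -/
def evalT : NCab →ₐ[ℝ] NCabt :=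
  FreeAlgebra.lift ℝ (fun g => if g then vt else 0)

/-- Auxiliary algebra map encoding the derivation `Δ` as the upper-triangular
representation `x ↦ [[x, Δx],[0, x]]`. -/
def derivRep : NCab →ₐ[ℝ] Matrix (Fin 2) (Fin 2) NCabt :=
  FreeAlgebra.lift ℝ (fun g =>
    Matrix.of ![![embed (FreeAlgebra.ι ℝ g), vt],
                ![0, embed (FreeAlgebra.ι ℝ g)]])

/-- The derivation `Δ : ℝ⟨a,b⟩ → ℝ⟨a,b,t⟩` determined by `Δ(a) = Δ(b) = t`,
`Δ(1) = 0` and the Leibniz rule `Δ(xy) = Δ(x)·y + x·Δ(y)` (here `x`, `y` on the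
right-hand side via the inclusion `embed`). -/
def Δab : NCab → NCabt := fun x => derivRep x 0 1

/-- The homogeneous component of degree `m` of `ℝ⟨a,b⟩`: the span of the words of
length `m` in `a`, `b`. -/
def degComponent (m : ℕ) : Submodule ℝ NCab :=
  Submodule.span ℝ
    {x | ∃ w : Fin m → Bool, x = (List.ofFn fun i => FreeAlgebra.ι ℝ (w i)).prod}

variable {V : Type*} [Fintype V] [DecidableEq V]

/-- The chains of the interval `[(u,0),(v,m+1)]` of the level poset of `M` with `k+1`
steps. -/
def chainSet (M : Matrix V V ℕ) (m k : ℕ) (u v : V) :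
    Finset ((Fin (k + 1) → Fin (m + 2)) × (Fin (k + 2) → V)) :=
  Finset.univ.filter fun p =>
    (∀ i, 1 ≤ (p.1 i : ℕ)) ∧ (∑ i, (p.1 i : ℕ)) = m + 1 ∧
    p.2 0 = u ∧ p.2 (Fin.last (k + 1)) = v ∧
    ∀ i : Fin (k + 1), 0 < (M ^ (p.1 i : ℕ)) (p.2 i.castSucc) (p.2 i.succ)

/-- The weight of a chain: `(a-b)^{ρ-1} b (a-b)^{ρ-1} b ⋯ b (a-b)^{ρ-1}`. -/
def chainWt {m k : ℕ} (p : (Fin (k + 1) → Fin (m + 2)) × (Fin (k + 2) → V)) : NCab :=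
  (List.ofFn fun i : Fin (k + 1) =>
    (va - vb) ^ ((p.1 i : ℕ) - 1) * (if (i : ℕ) < k then vb else 1)).prod

/-- The degree-`m` homogeneous component of the matrix `Ψ` of `ab`-series of the
level poset of `M`. -/
def PsiMat (M : Matrix V V ℕ) (m : ℕ) : Matrix V V NCab :=
  Matrix.of fun u v =>
    ∑ k ∈ Finset.range (m + 1), ∑ p ∈ chainSet M m k u v, chainWt p

/-- `Γ` (a matrix power series in `a`, `b`, given by its homogeneous components) is a
solution of the system `Ψ|_{a = t, b = 0} = K(t)` and `Δ(Ψ) = Ψ · t · Ψ`. -/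
def IsAbSeriesSolution (M : Matrix V V ℕ) (Γ : ℕ → Matrix V V NCab) : Prop :=
  (∀ (m : ℕ) (u v : V), Γ m u v ∈ degComponent m) ∧
  (∀ (m : ℕ) (u v : V), evalT (Γ m u v) =
    (if 0 < (M ^ (m + 1)) u v then 1 else 0 : NCabt) * vt ^ m) ∧
  (∀ (m : ℕ) (u v : V), Δab (Γ m u v) =
    ∑ i ∈ Finset.range m, ∑ w : V,
      embed (Γ i u w) * vt * embed (Γ (m - 1 - i) w v))

section PartA

lemma derivRep_diag (x : NCab) :
    derivRep x 0 0 = embed x ∧ derivRep x 1 1 = embed x ∧ derivRep x 1 0 = 0 := by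
  induction x using FreeAlgebra.induction with
  | grade0 r =>
      refine ⟨?_, ?_, ?_⟩ <;>
        simp [Matrix.algebraMap_matrix_apply]
  | grade1 g =>
      simp [derivRep, embed, Matrix.of_apply]
  | add x y hx hy =>
      simp [map_add, Matrix.add_apply, hx.1, hx.2.1, hx.2.2, hy.1, hy.2.1, hy.2.2]
  | mul x y hx hy =>
      simp only [map_mul, Matrix.mul_apply, Fin.sum_univ_two, hx.1, hx.2.1, hx.2.2,
        hy.1, hy.2.1, hy.2.2]
      constructor
      · simp
      constructor <;> simp

lemma Δab_one : Δab (1 : NCab) = 0 := by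
  simp [Δab, map_one, Matrix.one_apply]

lemma Δab_mul (x y : NCab) : Δab (x * y) = Δab x * embed y + embed x * Δab y := by
  simp only [Δab, map_mul, Matrix.mul_apply, Fin.sum_univ_two,
    (derivRep_diag x).1, (derivRep_diag y).2.1, (derivRep_diag y).2.2]
  abel

lemma Δab_add (x y : NCab) : Δab (x + y) = Δab x + Δab y := by
  simp [Δab, map_add]

lemma Δab_smul (r : ℝ) (x : NCab) : Δab (r • x) = r • Δab x := by
  simp [Δab, map_smul]

lemma Δab_sub (x y : NCab) : Δab (x - y) = Δab x - Δab y := by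
  simp [Δab, map_sub]

lemma Δab_zero : Δab (0 : NCab) = 0 := by simp [Δab]

lemma Δab_a : Δab va = vt := by simp [Δab, derivRep, va]
lemma Δab_b : Δab vb = vt := by simp [Δab, derivRep, vb]

lemma Δab_c_pow (n : ℕ) : Δab ((va - vb) ^ n) = 0 := by
  induction n with
  | zero => simpa using Δab_one
  | succ n ih =>
      rw [pow_succ, Δab_mul, ih]
      simp [Δab_sub, Δab_a, Δab_b]

end PartA
section PartB

lemma evalT_a : evalT va = vt := by simp [evalT, va]
lemma evalT_b : evalT vb = 0 := by simp [evalT, vb]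

lemma evalT_c_pow (n : ℕ) : evalT ((va - vb) ^ n) = vt ^ n := by
  rw [map_pow, map_sub, evalT_a, evalT_b, sub_zero]

/-- word of a list -/
def wordOf (l : List Bool) : NCab := (l.map (FreeAlgebra.ι ℝ)).prod

lemma wordOf_append (l1 l2 : List Bool) : wordOf (l1 ++ l2) = wordOf l1 * wordOf l2 := by
  simp [wordOf, List.map_append, List.prod_append]

lemma degComponent_eq (m : ℕ) :
    degComponent m = Submodule.span ℝ {x | ∃ l : List Bool, l.length = m ∧ x = wordOf l} := by
  unfold degComponent
  congr 1
  ext x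
  constructor
  · rintro ⟨w, rfl⟩
    exact ⟨List.ofFn w, by simp, by simp [wordOf, List.map_ofFn]; rfl⟩
  · rintro ⟨l, hl, rfl⟩
    refine ⟨fun i => l.get (Fin.cast hl.symm i), ?_⟩
    simp only [wordOf]
    congr 1
    subst hl
    conv_lhs => rw [← List.ofFn_get l]
    rw [List.map_ofFn]
    rfl

lemma wordOf_mem (l : List Bool) : wordOf l ∈ degComponent l.length := by
  rw [degComponent_eq]
  exact Submodule.subset_span ⟨l, rfl, rfl⟩

lemma degComponent_mul {i j : ℕ} {x y : NCab} (hx : x ∈ degComponent i)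
    (hy : y ∈ degComponent j) : x * y ∈ degComponent (i + j) := by
  rw [degComponent_eq] at hx hy ⊢
  induction hx using Submodule.span_induction with
  | mem x hx =>
      induction hy using Submodule.span_induction with
      | mem y hy =>
          obtain ⟨l1, hl1, rfl⟩ := hx
          obtain ⟨l2, hl2, rfl⟩ := hy
          rw [← wordOf_append]
          exact Submodule.subset_span ⟨l1 ++ l2, by simp [hl1, hl2], rfl⟩
      | zero => simp
      | add a b _ _ ha hb => rw [mul_add]; exact add_mem ha hb
      | smul r a _ ha => rw [mul_smul_comm]; exact Submodule.smul_mem _ r ha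
  | zero => simp
  | add a b _ _ ha hb => rw [add_mul]; exact add_mem ha hb
  | smul r a _ ha => rw [smul_mul_assoc]; exact Submodule.smul_mem _ r ha

lemma one_mem_degComponent : (1 : NCab) ∈ degComponent 0 :=
  wordOf_mem []

lemma vb_mem_degComponent : vb ∈ degComponent 1 := by
  have := wordOf_mem [false]
  simpa [wordOf, vb] using this

lemma c_mem_degComponent : va - vb ∈ degComponent 1 := by
  have ha := wordOf_mem [true]
  have hb := wordOf_mem [false]
  simp only [List.length] at ha hb
  have : va - vb = wordOf [true] - wordOf [false] := by simp [wordOf, va, vb]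
  rw [this]
  exact sub_mem ha hb

lemma c_pow_mem_degComponent (n : ℕ) : (va - vb) ^ n ∈ degComponent n := by
  induction n with
  | zero => simpa using one_mem_degComponent
  | succ n ih =>
      rw [pow_succ]
      exact degComponent_mul ih c_mem_degComponent

end PartB
section PartC

lemma ofFn_prod_mem : ∀ (n : ℕ) (f : Fin n → NCab) (d : Fin n → ℕ),
    (∀ i, f i ∈ degComponent (d i)) → (List.ofFn f).prod ∈ degComponent (∑ i, d i)
  | 0, f, d, _ => by simpa using one_mem_degComponent
  | n + 1, f, d, h => by
      rw [List.ofFn_succ, List.prod_cons, Fin.sum_univ_succ]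
      exact degComponent_mul (h 0) (ofFn_prod_mem n (fun i => f i.succ) (fun i => d i.succ)
        (fun i => h i.succ))

variable {V : Type*} [Fintype V] [DecidableEq V]

lemma mem_chainSet {M : Matrix V V ℕ} {m k : ℕ} {u v : V}
    {p : (Fin (k + 1) → Fin (m + 2)) × (Fin (k + 2) → V)} :
    p ∈ chainSet M m k u v ↔
    (∀ i, 1 ≤ (p.1 i : ℕ)) ∧ (∑ i, (p.1 i : ℕ)) = m + 1 ∧
    p.2 0 = u ∧ p.2 (Fin.last (k + 1)) = v ∧
    ∀ i : Fin (k + 1), 0 < (M ^ (p.1 i : ℕ)) (p.2 i.castSucc) (p.2 i.succ) := by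
  unfold chainSet
  rw [Finset.mem_filter]
  simp only [Finset.mem_univ, true_and]

lemma chainWt_mem {M : Matrix V V ℕ} {m k : ℕ} {u v : V}
    {p : (Fin (k + 1) → Fin (m + 2)) × (Fin (k + 2) → V)} (hp : p ∈ chainSet M m k u v) :
    chainWt p ∈ degComponent m := by
  rw [mem_chainSet] at hp
  obtain ⟨h1, h2, -, -, -⟩ := hp
  have key : ∑ i : Fin (k+1), (((p.1 i : ℕ) - 1) + if (i:ℕ) < k then 1 else 0) = m := by
    have e1 : ∑ i : Fin (k+1), (((p.1 i : ℕ) - 1) + if (i:ℕ) < k then 1 else 0)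
        = (∑ i : Fin (k+1), ((p.1 i : ℕ) - 1)) + ∑ i : Fin (k+1), (if (i:ℕ) < k then 1 else 0) :=
      Finset.sum_add_distrib
    have e2 : (∑ i : Fin (k+1), ((p.1 i : ℕ) - 1)) + (k+1) = m + 1 := by
      have e2a : ∑ i : Fin (k+1), (((p.1 i : ℕ) - 1) + 1) = m + 1 := by
        rw [← h2]
        exact Finset.sum_congr rfl fun i _ => by have := h1 i; omega
      rw [Finset.sum_add_distrib] at e2a
      simpa using e2a
    have e3 : ∑ i : Fin (k+1), (if (i:ℕ) < k then 1 else 0) = k := by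
      rw [Fin.sum_univ_castSucc]
      simp [Fin.is_lt]
    omega
  have h := ofFn_prod_mem (k+1)
    (fun i : Fin (k+1) => (va - vb) ^ ((p.1 i : ℕ) - 1) * (if (i : ℕ) < k then vb else 1))
    (fun i : Fin (k+1) => ((p.1 i : ℕ) - 1) + if (i:ℕ) < k then 1 else 0)
    (fun i => by
      apply degComponent_mul (c_pow_mem_degComponent _)
      by_cases hik : (i : ℕ) < k
      · simpa [hik] using vb_mem_degComponent
      · simpa [hik] using one_mem_degComponent)
  rw [key] at h
  exact h

lemma evalT_chainWt_pos {m k : ℕ} {p : (Fin (k + 1) → Fin (m + 2)) × (Fin (k + 2) → V)}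
    (hk : 0 < k) : evalT (chainWt p) = 0 := by
  unfold chainWt
  rw [List.ofFn_succ, List.prod_cons, map_mul, map_mul]
  simp [hk, evalT_b]

lemma chainSet_zero (M : Matrix V V ℕ) (m : ℕ) (u v : V) :
    chainSet M m 0 u v =
      if 0 < (M ^ (m+1)) u v then
        {((fun _ => (⟨m+1, by omega⟩ : Fin (m+2))), ![u, v])} else ∅ := by
  ext p
  rw [mem_chainSet]
  constructor
  · rintro ⟨h1, h2, h3, h4, h5⟩
    have hρ : (p.1 0 : ℕ) = m + 1 := by simpa using h2
    have hpos : 0 < (M ^ (m+1)) u v := by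
      have := h5 0
      rw [hρ] at this
      have e0 : p.2 (0 : Fin 1).castSucc = u := h3
      have e1 : p.2 (0 : Fin 1).succ = v := h4
      rwa [e0, e1] at this
    rw [if_pos hpos]
    simp only [Finset.mem_singleton]
    ext x
    · have hx0 : x = 0 := Fin.eq_zero x
      subst hx0
      show ((p.1 0 : ℕ)) = _
      simp [hρ]
    · fin_cases x
      · simpa using h3
      · simpa using h4
  · intro hp
    by_cases hpos : 0 < (M ^ (m+1)) u v
    · rw [if_pos hpos, Finset.mem_singleton] at hp
      subst hp
      refine ⟨fun i => by simp, by simp, rfl, rfl, fun i => ?_⟩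
      have hi0 : i = 0 := Fin.eq_zero i
      subst hi0
      simpa using hpos
    · rw [if_neg hpos] at hp
      exact absurd hp (Finset.notMem_empty _)

lemma chainWt_zero (m : ℕ) (u v : V) :
    chainWt ((fun _ => (⟨m+1, by omega⟩ : Fin (m+2))), ![u, v]) = (va - vb) ^ m := by
  unfold chainWt
  simp

lemma evalT_PsiMat (M : Matrix V V ℕ) (m : ℕ) (u v : V) :
    evalT (PsiMat M m u v) =
      (if 0 < (M ^ (m + 1)) u v then 1 else 0 : NCabt) * vt ^ m := by
  unfold PsiMat
  simp only [Matrix.of_apply, map_sum]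
  rw [Finset.sum_eq_single_of_mem 0 (by simp)]
  · rw [chainSet_zero]
    by_cases hpos : 0 < (M ^ (m+1)) u v
    · rw [if_pos hpos, if_pos hpos, Finset.sum_singleton, chainWt_zero, evalT_c_pow, one_mul]
    · rw [if_neg hpos, if_neg hpos, Finset.sum_empty, zero_mul]
  · intro k _ hk
    rw [Finset.sum_eq_zero]
    intro p _
    exact evalT_chainWt_pos (Nat.pos_of_ne_zero hk)

end PartC
section PartD

variable {V : Type*} [Fintype V] [DecidableEq V]

omit [Fintype V] [DecidableEq V] in
lemma chainWt_cons {m m' k r : ℕ} (p : (Fin (k+2) → Fin (m+2)) × (Fin (k+3) → V))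
    (q : (Fin (k+1) → Fin (m'+2)) × (Fin (k+2) → V))
    (h0 : (p.1 0 : ℕ) = r + 1) (hq : ∀ j : Fin (k+1), (q.1 j : ℕ) = (p.1 j.succ : ℕ)) :
    chainWt p = (va - vb) ^ r * vb * chainWt q := by
  unfold chainWt
  rw [List.ofFn_succ, List.prod_cons]
  have hfac : (va - vb) ^ ((p.1 0 : ℕ) - 1) * (if ((0 : Fin (k+2)) : ℕ) < k + 1 then vb else 1)
      = (va - vb) ^ r * vb := by
    rw [h0]
    simp
  have hl : (fun i : Fin (k+1) =>
        (va - vb) ^ ((p.1 i.succ : ℕ) - 1) * if (i.succ : ℕ) < k + 1 then vb else 1)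
      = (fun i : Fin (k+1) =>
        (va - vb) ^ ((q.1 i : ℕ) - 1) * if (i : ℕ) < k then vb else 1) := by
    funext j
    rw [hq j]
    congr 1
    simp [Fin.val_succ, Nat.succ_lt_succ_iff]
  rw [hfac, hl]

lemma tail_bound {M : Matrix V V ℕ} {m k : ℕ} {u v : V}
    {p : (Fin (k+2) → Fin (m+2)) × (Fin (k+3) → V)} (hp : p ∈ chainSet M m (k+1) u v) :
    (∀ j : Fin (k+1), (p.1 j.succ : ℕ) < m - 1 - ((p.1 0 : ℕ) - 1) + 2) ∧
    (∑ j : Fin (k+1), (p.1 j.succ : ℕ)) = m - 1 - ((p.1 0 : ℕ) - 1) + 1 ∧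
    (p.1 0 : ℕ) - 1 < m := by
  rw [mem_chainSet] at hp
  obtain ⟨h1, h2, -, -, -⟩ := hp
  rw [Fin.sum_univ_succ] at h2
  have hge : k + 1 ≤ ∑ j : Fin (k+1), (p.1 j.succ : ℕ) := by
    calc (k+1) = ∑ _j : Fin (k+1), 1 := by simp
    _ ≤ _ := Finset.sum_le_sum fun j _ => h1 j.succ
  have h0 : 1 ≤ (p.1 0 : ℕ) := h1 0
  refine ⟨fun j => ?_, by omega, by omega⟩
  have hle : (p.1 j.succ : ℕ) ≤ ∑ j : Fin (k+1), (p.1 j.succ : ℕ) :=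
    Finset.single_le_sum (f := fun j : Fin (k+1) => (p.1 j.succ : ℕ))
      (fun _ _ => Nat.zero_le _) (Finset.mem_univ j)
  omega

lemma chainSet_eq_empty {M : Matrix V V ℕ} {m' k : ℕ} (h : m' < k) (w v : V) :
    chainSet M m' k w v = ∅ := by
  rw [Finset.eq_empty_iff_forall_notMem]
  intro p hp
  rw [mem_chainSet] at hp
  obtain ⟨h1, h2, -, -, -⟩ := hp
  have hge : k + 1 ≤ ∑ i, (p.1 i : ℕ) := by
    calc (k+1) = ∑ _i : Fin (k+1), 1 := by simp
    _ ≤ _ := Finset.sum_le_sum fun i _ => h1 i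
  omega

lemma fiber_sum (M : Matrix V V ℕ) {m r : ℕ} (k : ℕ) (hr : r < m) (u v w : V) :
    ∑ p ∈ (chainSet M m (k+1) u v).filter
        (fun p => (((p.1 0 : ℕ) - 1, p.2 1) : ℕ × V) = (r, w)), chainWt p
    = if 0 < (M ^ (r+1)) u w then
        (va - vb) ^ r * vb * ∑ q ∈ chainSet M (m-1-r) k w v, chainWt q
      else 0 := by
  by_cases hpos : 0 < (M ^ (r+1)) u w
  · rw [if_pos hpos, Finset.mul_sum]
    refine Finset.sum_bij'
      (i := fun p hp =>
        ((fun j => ⟨(p.1 j.succ : ℕ), by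
            have hb := (tail_bound (Finset.mem_filter.mp hp).1).1 j
            have hc : ((p.1 0 : ℕ) - 1) = r :=
              congrArg Prod.fst (Finset.mem_filter.mp hp).2
            rw [hc] at hb
            exact hb⟩,
          fun j => p.2 j.succ) :
          (Fin (k+1) → Fin (m-1-r+2)) × (Fin (k+2) → V)))
      (j := fun q _ =>
        ((Fin.cases ⟨r+1, by omega⟩ (fun j => ⟨(q.1 j : ℕ), by have := (q.1 j).isLt; omega⟩),
          Fin.cases u q.2) :
          (Fin (k+2) → Fin (m+2)) × (Fin (k+3) → V)))
      ?_ ?_ ?_ ?_ ?_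
    · -- hi : image in chainSet M (m-1-r) k w v
      intro p hp
      obtain ⟨hps, hpf⟩ := Finset.mem_filter.mp hp
      have hb := tail_bound hps
      rw [mem_chainSet] at hps
      obtain ⟨h1, h2, h3, h4, h5⟩ := hps
      rw [Prod.mk.injEq] at hpf
      obtain ⟨hr0, hw⟩ := hpf
      rw [mem_chainSet]
      refine ⟨fun i => h1 i.succ, ?_, ?_, ?_, fun i => ?_⟩
      · show (∑ i : Fin (k+1), (p.1 i.succ : ℕ)) = m - 1 - r + 1
        have hs := hb.2.1
        rwa [hr0] at hs
      · show p.2 (0 : Fin (k+2)).succ = w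
        rw [show (0 : Fin (k+2)).succ = (1 : Fin (k+3)) from rfl]
        exact hw
      · show p.2 (Fin.last (k+1)).succ = v
        rw [Fin.succ_last]
        exact h4
      · show 0 < (M ^ (p.1 i.succ : ℕ)) (p.2 i.castSucc.succ) (p.2 i.succ.succ)
        rw [Fin.succ_castSucc]
        exact h5 i.succ
    · -- hj : backward image in filtered set
      intro q hq
      rw [mem_chainSet] at hq
      obtain ⟨h1, h2, h3, h4, h5⟩ := hq
      rw [Finset.mem_filter, mem_chainSet]
      refine ⟨⟨fun i => ?_, ?_, ?_, ?_, fun i => ?_⟩, ?_⟩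
      · induction i using Fin.cases with
        | zero => simp
        | succ j => simpa using h1 j
      · rw [Fin.sum_univ_succ]
        simp only [Fin.cases_zero, Fin.cases_succ]
        have : ∑ j : Fin (k+1), (q.1 j : ℕ) = m - 1 - r + 1 := h2
        omega
      · simp
      · rw [show (Fin.last (k+2)) = (Fin.last (k+1)).succ from (Fin.succ_last _).symm]
        simpa only [Fin.cases_succ] using h4
      · induction i using Fin.cases with
        | zero =>
            have e : (Fin.cases u q.2 : ∀ _ : Fin (k+3), V) 1 = q.2 0 := by
              have h10 : (1 : Fin (k+3)) = Fin.succ 0 := (Fin.succ_zero_eq_one).symm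
              rw [h10]
              exact Fin.cases_succ 0
            simp only [Fin.castSucc_zero, Fin.cases_zero, Fin.succ_zero_eq_one, e, h3]
            simpa using hpos
        | succ j =>
            rw [show (j.succ.castSucc) = (j.castSucc).succ from (Fin.succ_castSucc j).symm]
            simpa using h5 j
      · have e : (Fin.cases u q.2 : ∀ _ : Fin (k+3), V) 1 = q.2 0 := by
          have h10 : (1 : Fin (k+3)) = Fin.succ 0 := (Fin.succ_zero_eq_one).symm
          rw [h10]
          exact Fin.cases_succ 0
        simp [e, h3]
    · -- left_inv
      intro p hp
      obtain ⟨hps, hpf⟩ := Finset.mem_filter.mp hp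
      rw [mem_chainSet] at hps
      obtain ⟨h1, -, h3, -, -⟩ := hps
      rw [Prod.mk.injEq] at hpf
      obtain ⟨hr0, -⟩ := hpf
      refine Prod.ext ?_ ?_
      · funext i
        induction i using Fin.cases with
        | zero =>
            simp only [Fin.cases_zero]
            apply Fin.ext
            have := h1 0
            simp only []
            omega
        | succ j => simp
      · funext i
        induction i using Fin.cases with
        | zero => simpa using h3.symm
        | succ j => simp
    · -- right_inv
      intro q hq
      refine Prod.ext ?_ ?_
      · funext j
        apply Fin.ext
        simp
      · funext j
        simp
    · -- weights
      intro p hp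
      obtain ⟨hps, hpf⟩ := Finset.mem_filter.mp hp
      rw [Prod.mk.injEq] at hpf
      have h1 : ∀ i, 1 ≤ (p.1 i : ℕ) := ((mem_chainSet).mp hps).1
      exact chainWt_cons p _ (by have := h1 0; omega) (fun j => rfl)
  · rw [if_neg hpos]
    rw [Finset.filter_eq_empty_iff.mpr, Finset.sum_empty]
    intro p hps
    rw [mem_chainSet] at hps
    obtain ⟨h1, h2, h3, h4, h5⟩ := hps
    rw [Prod.mk.injEq]
    rintro ⟨hr0, hw⟩
    apply hpos
    have h50 := h5 0
    have he : (p.1 0 : ℕ) = r + 1 := by have := h1 0; omega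
    rw [he] at h50
    rw [Fin.castSucc_zero, Fin.succ_zero_eq_one, h3, hw] at h50
    exact h50

lemma psi_recursion (M : Matrix V V ℕ) (m : ℕ) (u v : V) :
    PsiMat M m u v =
      (if 0 < (M ^ (m+1)) u v then (va - vb) ^ m else 0)
      + ∑ r ∈ Finset.range m, ∑ w : V,
          (if 0 < (M ^ (r+1)) u w then (1 : NCab) else 0) *
            ((va - vb) ^ r * vb * PsiMat M (m - 1 - r) w v) := by
  have hL : PsiMat M m u v = ∑ k ∈ Finset.range (m+1), ∑ p ∈ chainSet M m k u v, chainWt p := rfl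
  rw [hL, Finset.sum_range_succ', add_comm]
  congr 1
  · -- k = 0 term
    rw [chainSet_zero]
    by_cases hpos : 0 < (M ^ (m+1)) u v
    · rw [if_pos hpos, if_pos hpos, Finset.sum_singleton, chainWt_zero]
    · rw [if_neg hpos, if_neg hpos, Finset.sum_empty]
  · -- k ≥ 1 terms
    have step : ∀ k : ℕ, ∑ p ∈ chainSet M m (k+1) u v, chainWt p
        = ∑ r ∈ Finset.range m, ∑ w : V,
            (if 0 < (M ^ (r+1)) u w then
              (va - vb) ^ r * vb * ∑ q ∈ chainSet M (m-1-r) k w v, chainWt q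
            else 0) := by
      intro k
      rw [← Finset.sum_fiberwise_of_maps_to
        (g := fun p => (((p.1 0 : ℕ) - 1, p.2 1) : ℕ × V))
        (t := Finset.range m ×ˢ Finset.univ)
        (fun p hp => by
          rw [Finset.mem_product]
          exact ⟨Finset.mem_range.mpr (tail_bound hp).2.2, Finset.mem_univ _⟩) chainWt]
      rw [Finset.sum_product]
      exact Finset.sum_congr rfl fun r hr => Finset.sum_congr rfl fun w _ =>
        fiber_sum M k (Finset.mem_range.mp hr) u v w
    calc ∑ k ∈ Finset.range m, ∑ p ∈ chainSet M m (k+1) u v, chainWt p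
        = ∑ k ∈ Finset.range m, ∑ r ∈ Finset.range m, ∑ w : V,
            (if 0 < (M ^ (r+1)) u w then
              (va - vb) ^ r * vb * ∑ q ∈ chainSet M (m-1-r) k w v, chainWt q
            else 0) := Finset.sum_congr rfl fun k _ => step k
      _ = ∑ r ∈ Finset.range m, ∑ k ∈ Finset.range m, ∑ w : V,
            (if 0 < (M ^ (r+1)) u w then
              (va - vb) ^ r * vb * ∑ q ∈ chainSet M (m-1-r) k w v, chainWt q
            else 0) := Finset.sum_comm
      _ = ∑ r ∈ Finset.range m, ∑ w : V, ∑ k ∈ Finset.range m,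
            (if 0 < (M ^ (r+1)) u w then
              (va - vb) ^ r * vb * ∑ q ∈ chainSet M (m-1-r) k w v, chainWt q
            else 0) := Finset.sum_congr rfl fun r _ => Finset.sum_comm
      _ = ∑ r ∈ Finset.range m, ∑ w : V,
          (if 0 < (M ^ (r+1)) u w then (1 : NCab) else 0) *
            ((va - vb) ^ r * vb * PsiMat M (m - 1 - r) w v) := by
          refine Finset.sum_congr rfl fun r hr => Finset.sum_congr rfl fun w _ => ?_
          have hrm : r < m := Finset.mem_range.mp hr
          have hPsi : PsiMat M (m-1-r) w v
              = ∑ k ∈ Finset.range (m-1-r+1), ∑ q ∈ chainSet M (m-1-r) k w v, chainWt q := rfl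
          by_cases hpos : 0 < (M ^ (r+1)) u w
          · simp only [if_pos hpos, one_mul]
            have hsub : ∑ k ∈ Finset.range (m-1-r+1), ∑ q ∈ chainSet M (m-1-r) k w v, chainWt q
                = ∑ k ∈ Finset.range m, ∑ q ∈ chainSet M (m-1-r) k w v, chainWt q :=
              Finset.sum_subset (Finset.range_subset_range.mpr (by omega : m-1-r+1 ≤ m))
                (fun k _ hk => by
                  rw [chainSet_eq_empty (by simp only [Finset.mem_range] at hk; omega) w v,
                    Finset.sum_empty])
            rw [hPsi, hsub, Finset.mul_sum]
          · simp [hpos]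

end PartD
section PartE

lemma Δab_sum {ι : Type*} (s : Finset ι) (f : ι → NCab) :
    Δab (∑ i ∈ s, f i) = ∑ i ∈ s, Δab (f i) := by
  classical
  induction s using Finset.induction with
  | empty => simp [Δab_zero]
  | insert a s h ih => rw [Finset.sum_insert h, Δab_add, ih, Finset.sum_insert h]

lemma triangle {α : Type*} [AddCommMonoid α] (n : ℕ) (f : ℕ → ℕ → α) :
    ∑ i ∈ Finset.range n, ∑ r ∈ Finset.range i, f r i
    = ∑ r ∈ Finset.range n, ∑ j ∈ Finset.range (n-1-r), f r (r+1+j) := by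
  induction n with
  | zero => simp
  | succ n ih =>
      rw [Finset.sum_range_succ, ih, Finset.sum_range_succ,
        show n+1-1-n = 0 by omega]
      simp only [Finset.range_zero, Finset.sum_empty, add_zero]
      rw [← Finset.sum_add_distrib]
      refine Finset.sum_congr rfl fun r hr => ?_
      have hrn : r < n := Finset.mem_range.mp hr
      rw [show (n+1)-1-r = (n-1-r)+1 by omega, Finset.sum_range_succ,
        show r+1+(n-1-r) = n by omega]

variable {V : Type*} [Fintype V] [DecidableEq V]

lemma delta_PsiMat (M : Matrix V V ℕ) (m : ℕ) (u v : V) :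
    Δab (PsiMat M m u v) = ∑ i ∈ Finset.range m, ∑ w : V,
      embed (PsiMat M i u w) * vt * embed (PsiMat M (m - 1 - i) w v) := by
  induction m using Nat.strong_induction_on generalizing u v with
  | _ m IH =>
  -- LHS computation
  have h0 : Δab (if 0 < (M ^ (m+1)) u v then (va - vb) ^ m else 0) = 0 := by
    split_ifs
    · exact Δab_c_pow m
    · exact Δab_zero
  have hterm : ∀ r, r < m → ∀ w : V,
      Δab ((if 0 < (M ^ (r+1)) u w then (1 : NCab) else 0) *
          ((va - vb) ^ r * vb * PsiMat M (m - 1 - r) w v))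
      = (if 0 < (M ^ (r+1)) u w then
          embed ((va - vb) ^ r) * vt * embed (PsiMat M (m-1-r) w v) else 0)
        + (if 0 < (M ^ (r+1)) u w then
          embed ((va - vb) ^ r * vb) * Δab (PsiMat M (m-1-r) w v) else 0) := by
    intro r hr w
    rw [ite_mul, one_mul, zero_mul]
    split_ifs with h
    · rw [Δab_mul ((va - vb) ^ r * vb) (PsiMat M (m-1-r) w v), Δab_mul,
        Δab_c_pow, Δab_b, zero_mul, zero_add]
    · rw [add_zero]
      exact Δab_zero
  have hLHS : Δab (PsiMat M m u v)
      = (∑ r ∈ Finset.range m, ∑ w : V,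
          if 0 < (M ^ (r+1)) u w then
            embed ((va - vb) ^ r) * vt * embed (PsiMat M (m-1-r) w v) else 0)
        + ∑ r ∈ Finset.range m, ∑ w : V,
          if 0 < (M ^ (r+1)) u w then
            embed ((va - vb) ^ r * vb) * Δab (PsiMat M (m-1-r) w v) else 0 := by
    rw [psi_recursion M m u v, Δab_add, h0, zero_add, Δab_sum]
    rw [← Finset.sum_add_distrib]
    refine Finset.sum_congr rfl fun r hr => ?_
    rw [Δab_sum, ← Finset.sum_add_distrib]
    exact Finset.sum_congr rfl fun w _ => hterm r (Finset.mem_range.mp hr) w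
  -- use IH in the B part
  have hB : (∑ r ∈ Finset.range m, ∑ w : V,
        if 0 < (M ^ (r+1)) u w then
          embed ((va - vb) ^ r * vb) * Δab (PsiMat M (m-1-r) w v) else 0)
      = ∑ r ∈ Finset.range m, ∑ w : V, ∑ j ∈ Finset.range (m-1-r), ∑ w' : V,
          if 0 < (M ^ (r+1)) u w then
            embed ((va - vb) ^ r * vb) *
              (embed (PsiMat M j w w') * vt * embed (PsiMat M (m-1-r-1-j) w' v)) else 0 := by
    refine Finset.sum_congr rfl fun r hr => Finset.sum_congr rfl fun w _ => ?_
    have hrm : r < m := Finset.mem_range.mp hr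
    rw [IH (m-1-r) (by omega)]
    split_ifs with h
    · rw [Finset.mul_sum]
      refine Finset.sum_congr rfl fun j _ => ?_
      rw [Finset.mul_sum]
    · simp
  -- RHS computation
  have hE : ∀ i w', embed (PsiMat M i u w')
      = (if 0 < (M ^ (i+1)) u w' then embed ((va - vb) ^ i) else 0)
        + ∑ r ∈ Finset.range i, ∑ w : V,
          (if 0 < (M ^ (r+1)) u w then
            embed ((va - vb) ^ r * vb * PsiMat M (i-1-r) w w') else 0) := by
    intro i w'
    rw [psi_recursion M i u w', map_add, map_sum]
    congr 1
    · split_ifs <;> simp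
    · refine Finset.sum_congr rfl fun r _ => ?_
      rw [map_sum]
      refine Finset.sum_congr rfl fun w _ => ?_
      rw [map_mul]
      split_ifs <;> simp
  have hRHS : (∑ i ∈ Finset.range m, ∑ w : V,
        embed (PsiMat M i u w) * vt * embed (PsiMat M (m - 1 - i) w v))
      = (∑ r ∈ Finset.range m, ∑ w : V,
          if 0 < (M ^ (r+1)) u w then
            embed ((va - vb) ^ r) * vt * embed (PsiMat M (m-1-r) w v) else 0)
        + ∑ i ∈ Finset.range m, ∑ w' : V, ∑ r ∈ Finset.range i, ∑ w : V,
          if 0 < (M ^ (r+1)) u w then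
            embed ((va - vb) ^ r * vb * PsiMat M (i-1-r) w w') * vt *
              embed (PsiMat M (m-1-i) w' v) else 0 := by
    rw [← Finset.sum_add_distrib]
    refine Finset.sum_congr rfl fun i _ => ?_
    rw [← Finset.sum_add_distrib]
    refine Finset.sum_congr rfl fun w' _ => ?_
    rw [hE i w', add_mul, add_mul]
    congr 1
    · rw [ite_mul, ite_mul, zero_mul, zero_mul]
    · rw [Finset.sum_mul, Finset.sum_mul]
      refine Finset.sum_congr rfl fun r _ => ?_
      rw [Finset.sum_mul, Finset.sum_mul]
      refine Finset.sum_congr rfl fun w _ => ?_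
      rw [ite_mul, ite_mul, zero_mul, zero_mul]
  -- massage the second RHS part into hB's form
  have hswap : (∑ i ∈ Finset.range m, ∑ w' : V, ∑ r ∈ Finset.range i, ∑ w : V,
          if 0 < (M ^ (r+1)) u w then
            embed ((va - vb) ^ r * vb * PsiMat M (i-1-r) w w') * vt *
              embed (PsiMat M (m-1-i) w' v) else 0)
      = ∑ i ∈ Finset.range m, ∑ r ∈ Finset.range i, ∑ w : V, ∑ w' : V,
          if 0 < (M ^ (r+1)) u w then
            embed ((va - vb) ^ r * vb * PsiMat M (i-1-r) w w') * vt *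
              embed (PsiMat M (m-1-i) w' v) else 0 := by
    refine Finset.sum_congr rfl fun i _ => ?_
    rw [Finset.sum_comm]
    exact Finset.sum_congr rfl fun r _ => Finset.sum_comm
  have hB2 : (∑ r ∈ Finset.range m, ∑ w : V, ∑ j ∈ Finset.range (m-1-r), ∑ w' : V,
          if 0 < (M ^ (r+1)) u w then
            embed ((va - vb) ^ r * vb) *
              (embed (PsiMat M j w w') * vt * embed (PsiMat M (m-1-r-1-j) w' v)) else 0)
      = ∑ r ∈ Finset.range m, ∑ j ∈ Finset.range (m-1-r), ∑ w : V, ∑ w' : V,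
          if 0 < (M ^ (r+1)) u w then
            embed ((va - vb) ^ r * vb) *
              (embed (PsiMat M j w w') * vt * embed (PsiMat M (m-1-r-1-j) w' v)) else 0 :=
    Finset.sum_congr rfl fun r _ => Finset.sum_comm
  rw [hLHS, hB, hB2, hRHS, hswap, triangle m]
  congr 1
  refine Finset.sum_congr rfl fun r hr => ?_
  refine Finset.sum_congr rfl fun j hj => ?_
  refine Finset.sum_congr rfl fun w _ => ?_
  refine Finset.sum_congr rfl fun w' _ => ?_
  have e1 : r+1+j-1-r = j := by omega
  have e2 : m-1-(r+1+j) = m-1-r-1-j := by omega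
  rw [e1, e2]
  split_ifs with h
  · simp only [map_mul, mul_assoc]
  · rfl

lemma PsiMat_mem_degComponent (M : Matrix V V ℕ) (m : ℕ) (u v : V) :
    PsiMat M m u v ∈ degComponent m := by
  have : PsiMat M m u v = ∑ k ∈ Finset.range (m+1), ∑ p ∈ chainSet M m k u v, chainWt p := rfl
  rw [this]
  refine Submodule.sum_mem _ fun k _ => Submodule.sum_mem _ fun p hp => chainWt_mem hp

end PartE
section PartF

def toMA : NCab ≃ₐ[ℝ] MonoidAlgebra ℝ (FreeMonoid Bool) :=
  FreeAlgebra.equivMonoidAlgebraFreeMonoid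

def toMA3 : NCabt ≃ₐ[ℝ] MonoidAlgebra ℝ (FreeMonoid (Fin 3)) :=
  FreeAlgebra.equivMonoidAlgebraFreeMonoid

def wordOf3 (l : List (Fin 3)) : NCabt := (l.map (FreeAlgebra.ι ℝ)).prod

lemma wordOf3_append (l1 l2 : List (Fin 3)) :
    wordOf3 (l1 ++ l2) = wordOf3 l1 * wordOf3 l2 := by
  simp [wordOf3, List.map_append, List.prod_append]

lemma toMA_ι (g : Bool) : toMA (FreeAlgebra.ι ℝ g)
    = MonoidAlgebra.single (FreeMonoid.of g) 1 := by
  simp [toMA, FreeAlgebra.equivMonoidAlgebraFreeMonoid]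

lemma toMA3_ι (g : Fin 3) : toMA3 (FreeAlgebra.ι ℝ g)
    = MonoidAlgebra.single (FreeMonoid.of g) 1 := by
  simp [toMA3, FreeAlgebra.equivMonoidAlgebraFreeMonoid]

lemma toMA_wordOf (l : List Bool) :
    toMA (wordOf l) = MonoidAlgebra.single (FreeMonoid.ofList l) 1 := by
  induction l with
  | nil =>
      show toMA 1 = _
      rw [map_one, MonoidAlgebra.one_def, FreeMonoid.ofList_nil]
  | cons g l ih =>
      have h : wordOf (g :: l) = FreeAlgebra.ι ℝ g * wordOf l := by simp [wordOf]
      rw [h, map_mul, toMA_ι, ih, MonoidAlgebra.single_mul_single, one_mul,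
        FreeMonoid.ofList_cons]

lemma toMA3_wordOf3 (l : List (Fin 3)) :
    toMA3 (wordOf3 l) = MonoidAlgebra.single (FreeMonoid.ofList l) 1 := by
  induction l with
  | nil =>
      show toMA3 1 = _
      rw [map_one, MonoidAlgebra.one_def, FreeMonoid.ofList_nil]
  | cons g l ih =>
      have h : wordOf3 (g :: l) = FreeAlgebra.ι ℝ g * wordOf3 l := by simp [wordOf3]
      rw [h, map_mul, toMA3_ι, ih, MonoidAlgebra.single_mul_single, one_mul,
        FreeMonoid.ofList_cons]

def coeffL (l : List Bool) : NCab →ₗ[ℝ] ℝ :=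
  (Finsupp.lapply (FreeMonoid.ofList l)).comp ((MonoidAlgebra.coeffLinearEquiv (R := ℝ)).toLinearMap.comp toMA.toLinearMap)

def coeffL3 (l : List (Fin 3)) : NCabt →ₗ[ℝ] ℝ :=
  (Finsupp.lapply (FreeMonoid.ofList l)).comp ((MonoidAlgebra.coeffLinearEquiv (R := ℝ)).toLinearMap.comp toMA3.toLinearMap)

lemma coeffL_wordOf (l l' : List Bool) :
    coeffL l' (wordOf l) = if l = l' then 1 else 0 := by
  show (toMA (wordOf l)).coeff (FreeMonoid.ofList l') = _
  classical
  rw [toMA_wordOf, MonoidAlgebra.coeff_single, Finsupp.single_apply]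
  by_cases h : l = l'
  · simp [h]
  · simp [h, Equiv.apply_eq_iff_eq]

lemma coeffL3_wordOf3 (l l' : List (Fin 3)) :
    coeffL3 l' (wordOf3 l) = if l = l' then 1 else 0 := by
  show (toMA3 (wordOf3 l)).coeff (FreeMonoid.ofList l') = _
  classical
  rw [toMA3_wordOf3, MonoidAlgebra.coeff_single, Finsupp.single_apply]
  by_cases h : l = l'
  · simp [h]
  · simp [h, Equiv.apply_eq_iff_eq]

lemma eq_zero_of_coeff {x : NCab} (h : ∀ l : List Bool, coeffL l x = 0) : x = 0 := by
  apply toMA.injective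
  rw [map_zero]
  exact MonoidAlgebra.ext (Finsupp.ext fun a => h (FreeMonoid.toList a))

lemma coeff_eq_zero_of_length {m : ℕ} {x : NCab} (hx : x ∈ degComponent m)
    (l : List Bool) (hl : l.length ≠ m) : coeffL l x = 0 := by
  rw [degComponent_eq] at hx
  induction hx using Submodule.span_induction with
  | mem y hy =>
      obtain ⟨l', hl', rfl⟩ := hy
      rw [coeffL_wordOf, if_neg]
      rintro rfl
      exact hl hl'
  | zero => simp
  | add a b _ _ ha hb => rw [map_add, ha, hb, add_zero]
  | smul r a _ ha => rw [map_smul, ha, smul_zero]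

lemma Δab_ι (g : Bool) : Δab (FreeAlgebra.ι ℝ g) = vt := by
  simp [Δab, derivRep]

lemma Dword (l : List Bool) : Δab (wordOf l) = ∑ p ∈ Finset.range l.length,
    embed (wordOf (l.take p)) * vt * embed (wordOf (l.drop (p+1))) := by
  induction l with
  | nil => simpa [wordOf] using Δab_one
  | cons g l ih =>
      have h1 : wordOf (g :: l) = FreeAlgebra.ι ℝ g * wordOf l := by simp [wordOf]
      rw [h1, Δab_mul, Δab_ι, ih, List.length_cons, Finset.sum_range_succ', add_comm]
      congr 1
      · rw [Finset.mul_sum]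
        refine Finset.sum_congr rfl fun p _ => ?_
        have ht : (g :: l).take (p+1) = g :: l.take p := rfl
        have hd : (g :: l).drop (p+1+1) = l.drop (p+1) := rfl
        rw [ht, hd]
        have hw : wordOf (g :: l.take p) = FreeAlgebra.ι ℝ g * wordOf (l.take p) := by
          simp [wordOf]
        rw [hw, map_mul]
        simp only [mul_assoc]
      · show vt * embed (wordOf l) = embed (wordOf ((g :: l).take 0)) * vt *
          embed (wordOf ((g :: l).drop 1))
        simp only [List.take_zero, List.drop_one, List.tail_cons]
        show vt * embed (wordOf l) = embed (wordOf []) * vt * embed (wordOf l)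
        simp [wordOf]

def code (g : Bool) : Fin 3 := if g then 0 else 1

lemma code_injective : Function.Injective code := by
  intro a b h
  cases a <;> cases b <;> simp [code] at h ⊢ <;> omega

lemma code_ne_two (g : Bool) : code g ≠ 2 := by
  cases g <;> simp [code] <;> omega

lemma embed_wordOf (l : List Bool) : embed (wordOf l) = wordOf3 (l.map code) := by
  induction l with
  | nil =>
      show embed 1 = (1 : NCabt)
      rw [map_one]
  | cons g l ih =>
      have h1 : wordOf (g :: l) = FreeAlgebra.ι ℝ g * wordOf l := by simp [wordOf]
      have h2 : wordOf3 ((g :: l).map code) = FreeAlgebra.ι ℝ (code g) * wordOf3 (l.map code) := by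
        simp [wordOf3]
      rw [h1, h2, map_mul, ih]
      congr 1
      cases g <;> simp [embed, va', vb', code]

lemma vt_eq : vt = FreeAlgebra.ι ℝ (2 : Fin 3) := rfl

lemma vt_pow_eq (n : ℕ) : vt ^ n = wordOf3 (List.replicate n 2) := by
  induction n with
  | zero => simp [wordOf3]
  | succ n ih =>
      rw [List.replicate_succ]
      have : wordOf3 ((2 : Fin 3) :: List.replicate n 2)
          = FreeAlgebra.ι ℝ (2 : Fin 3) * wordOf3 (List.replicate n 2) := by simp [wordOf3]
      rw [this, ← ih, ← vt_eq, pow_succ']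

lemma append_two_inj : ∀ (A A' B B' : List (Fin 3)), (2:Fin 3) ∉ A → (2:Fin 3) ∉ A' →
    A ++ (2:Fin 3) :: B = A' ++ (2:Fin 3) :: B' → A = A' ∧ B = B'
  | [], [], B, B', _, _, h => ⟨rfl, by simpa using h⟩
  | [], a' :: T', B, B', _, hA', h => by
      simp only [List.nil_append, List.cons_append, List.cons.injEq] at h
      simp only [List.mem_cons, not_or] at hA'
      exact (hA'.1 h.1.symm.symm).elim
  | a :: T, [], B, B', hA, _, h => by
      simp only [List.cons_append, List.nil_append, List.cons.injEq] at h
      simp only [List.mem_cons, not_or] at hA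
      exact (hA.1 h.1.symm).elim
  | a :: T, a' :: T', B, B', hA, hA', h => by
      simp only [List.cons_append, List.cons.injEq] at h
      have ih := append_two_inj T T' B B' (by simp at hA; exact hA.2) (by simp at hA'; exact hA'.2) h.2
      exact ⟨by rw [h.1, ih.1], ih.2⟩

end PartF
section PartG

lemma two_not_mem_map_code (l : List Bool) : (2 : Fin 3) ∉ l.map code := by
  simp only [List.mem_map, not_exists]
  rintro g ⟨-, hg⟩
  exact code_ne_two g hg

lemma term_as_word (l : List Bool) (p : ℕ) :
    embed (wordOf (l.take p)) * vt * embed (wordOf (l.drop (p+1)))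
      = wordOf3 ((l.take p).map code ++ (2 : Fin 3) :: (l.drop (p+1)).map code) := by
  rw [embed_wordOf, embed_wordOf, wordOf3_append]
  have h2 : wordOf3 ((2 : Fin 3) :: (l.drop (p+1)).map code)
      = FreeAlgebra.ι ℝ (2 : Fin 3) * wordOf3 ((l.drop (p+1)).map code) := by simp [wordOf3]
  rw [h2, ← vt_eq, mul_assoc]

lemma coeff_delta {m : ℕ} {x : NCab} (hx : x ∈ degComponent m) (l1 l2 : List Bool)
    (hlen : l1.length + 1 + l2.length = m) :
    coeffL3 (l1.map code ++ (2 : Fin 3) :: l2.map code) (Δab x)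
      = coeffL (l1 ++ true :: l2) x + coeffL (l1 ++ false :: l2) x := by
  rw [degComponent_eq] at hx
  induction hx using Submodule.span_induction with
  | mem y hy =>
      obtain ⟨l, hl, rfl⟩ := hy
      rw [Dword, map_sum]
      have hterm : ∀ p, coeffL3 (l1.map code ++ (2 : Fin 3) :: l2.map code)
          (embed (wordOf (l.take p)) * vt * embed (wordOf (l.drop (p+1))))
          = if ((l.take p).map code ++ (2 : Fin 3) :: (l.drop (p+1)).map code)
              = (l1.map code ++ (2 : Fin 3) :: l2.map code) then 1 else 0 := by
        intro p
        rw [term_as_word, coeffL3_wordOf3]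
      have hq : l1.length < l.length := by rw [hl]; omega
      rw [Finset.sum_eq_single l1.length]
      rotate_left
      · intro p hp hpq
        rw [hterm p, if_neg]
        intro hc
        obtain ⟨hA, -⟩ := append_two_inj _ _ _ _ (two_not_mem_map_code _)
          (two_not_mem_map_code _) hc
        have : ((l.take p).map code).length = (l1.map code).length := by rw [hA]
        simp only [List.length_map, List.length_take] at this
        rw [min_eq_left (le_of_lt (Finset.mem_range.mp hp))] at this
        exact hpq this
      · intro hq'
        exact absurd (Finset.mem_range.mpr hq) hq'
      rw [hterm, coeffL_wordOf, coeffL_wordOf]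
      by_cases hc : ((l.take l1.length).map code ++ (2 : Fin 3) :: (l.drop (l1.length+1)).map code)
          = (l1.map code ++ (2 : Fin 3) :: l2.map code)
      · rw [if_pos hc]
        obtain ⟨hA, hB⟩ := append_two_inj _ _ _ _ (two_not_mem_map_code _)
          (two_not_mem_map_code _) hc
        have hTake : l.take l1.length = l1 := List.map_injective_iff.mpr code_injective hA
        have hDrop : l.drop (l1.length + 1) = l2 := List.map_injective_iff.mpr code_injective hB
        have hdec : l = l1 ++ l[l1.length] :: l2 := by
          conv_lhs => rw [← List.take_append_drop l1.length l]
          rw [List.drop_eq_getElem_cons hq, hTake, hDrop]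
        cases hG : l[l1.length] with
        | true =>
            rw [hG] at hdec
            rw [if_pos hdec, if_neg, add_zero]
            intro hfalse
            rw [hdec] at hfalse
            have := List.append_cancel_left hfalse
            simp at this
        | false =>
            rw [hG] at hdec
            rw [if_pos hdec, if_neg, zero_add]
            intro htrue
            rw [hdec] at htrue
            have := List.append_cancel_left htrue
            simp at this
      · have hdropf : (l1 ++ false :: l2).drop (l1.length + 1) = l2 := by
          rw [show l1 ++ false :: l2 = (l1 ++ [false]) ++ l2 by simp,
            List.drop_left' (by simp)]
        have hdropt : (l1 ++ true :: l2).drop (l1.length + 1) = l2 := by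
          rw [show l1 ++ true :: l2 = (l1 ++ [true]) ++ l2 by simp,
            List.drop_left' (by simp)]
        rw [if_neg hc, if_neg, if_neg, add_zero]
        · intro hfe
          apply hc
          rw [hfe, List.take_left' rfl, hdropf]
        · intro hte
          apply hc
          rw [hte, List.take_left' rfl, hdropt]
  | zero => simp [Δab_zero]
  | add a b _ _ ha hb =>
      rw [Δab_add, map_add, map_add, map_add, ha, hb]
      ring
  | smul r a _ ha =>
      rw [Δab_smul, map_smul, map_smul, map_smul, ha]
      simp only [smul_eq_mul]
      ring

lemma evalT_wordOf (l : List Bool) :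
    evalT (wordOf l) = if l = List.replicate l.length true then vt ^ l.length else 0 := by
  induction l with
  | nil => simp [wordOf]
  | cons g l ih =>
      have h1 : wordOf (g :: l) = FreeAlgebra.ι ℝ g * wordOf l := by simp [wordOf]
      rw [h1, map_mul, ih]
      cases g with
      | false =>
          have : evalT (FreeAlgebra.ι ℝ false) = 0 := by simp [evalT]
          rw [this, zero_mul, if_neg]
          simp [List.replicate_succ]
      | true =>
          have : evalT (FreeAlgebra.ι ℝ true) = vt := by simp [evalT, vt]
          rw [this]
          by_cases hc : l = List.replicate l.length true
          · rw [if_pos hc, if_pos]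
            · rw [List.length_cons, pow_succ']
            · rw [List.length_cons, List.replicate_succ]
              rw [← hc]
          · rw [if_neg hc, mul_zero, if_neg]
            rw [List.length_cons, List.replicate_succ]
            intro h
            exact hc (by simpa using h)

lemma coeff_evalT {m : ℕ} {x : NCab} (hx : x ∈ degComponent m) :
    coeffL3 (List.replicate m 2) (evalT x) = coeffL (List.replicate m true) x := by
  rw [degComponent_eq] at hx
  induction hx using Submodule.span_induction with
  | mem y hy =>
      obtain ⟨l, hl, rfl⟩ := hy
      rw [evalT_wordOf, coeffL_wordOf, hl]
      by_cases hc : l = List.replicate m true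
      · rw [if_pos hc, if_pos hc, vt_pow_eq, coeffL3_wordOf3, if_pos rfl]
      · rw [if_neg hc, if_neg hc, map_zero]
  | zero => simp
  | add a b _ _ ha hb => rw [map_add, map_add, map_add, ha, hb]
  | smul r a _ ha => rw [map_smul, map_smul, map_smul, ha]

lemma kernel_lemma {m : ℕ} {x : NCab} (hx : x ∈ degComponent m)
    (hΔ : Δab x = 0) (hT : evalT x = 0) : x = 0 := by
  apply eq_zero_of_coeff
  have key : ∀ n : ℕ, ∀ l : List Bool, l.length = m → l.count false = n → coeffL l x = 0 := by
    intro n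
    induction n with
    | zero =>
        intro l hlen hcnt
        have hrep : l = List.replicate m true := by
          rw [← hlen]
          apply List.eq_replicate_of_mem
          intro b hb
          cases b
          · exact absurd (List.count_pos_iff.mpr hb) (by omega)
          · rfl
        rw [hrep, ← coeff_evalT hx, hT, map_zero]
    | succ n ih =>
        intro l hlen hcnt
        have hmem : false ∈ l := by
          apply List.count_pos_iff.mp
          omega
        obtain ⟨l1, l2, rfl⟩ := List.append_of_mem hmem
        have hlen' : l1.length + 1 + l2.length = m := by
          simp only [List.length_append, List.length_cons] at hlen
          omega
        have hkey := coeff_delta hx l1 l2 hlen'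
        rw [hΔ, map_zero] at hkey
        have hcnt' : (l1 ++ true :: l2).count false = n := by
          have h1 : (l1 ++ false :: l2).count false
              = l1.count false + (l2.count false + 1) := by
            simp [List.count_append]
          have h2 : (l1 ++ true :: l2).count false
              = l1.count false + l2.count false := by
            simp [List.count_append]
          omega
        have h0 : coeffL (l1 ++ true :: l2) x = 0 :=
          ih (l1 ++ true :: l2) (by simp only [List.length_append, List.length_cons]; omega) hcnt'
        rw [h0] at hkey
        linarith [hkey]
  intro l
  by_cases hlen : l.length = m
  · exact key (l.count false) l hlen rfl
  · exact coeff_eq_zero_of_length hx l hlen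

end PartG
/-- The matrix `Ψ` of `ab`-series of a level poset is the unique matrix power series
solution of the system `Ψ|_{a = t, b = 0} = K(t)` and `Δ(Ψ) = Ψ · t · Ψ`. -/
theorem psi_unique_solution (M : Matrix V V ℕ) (hbin : ∀ u v, M u v ≤ 1) :
    IsAbSeriesSolution M (PsiMat M) ∧
    ∀ Γ : ℕ → Matrix V V NCab, IsAbSeriesSolution M Γ → Γ = PsiMat M := by
  constructor
  · exact ⟨fun m u v => PsiMat_mem_degComponent M m u v,
      fun m u v => evalT_PsiMat M m u v,
      fun m u v => delta_PsiMat M m u v⟩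
  · intro Γ hΓ
    obtain ⟨hdeg, hev, hΔ⟩ := hΓ
    funext m
    induction m using Nat.strong_induction_on with
    | _ m IH =>
    ext u v
    have hx : Γ m u v - PsiMat M m u v ∈ degComponent m :=
      sub_mem (hdeg m u v) (PsiMat_mem_degComponent M m u v)
    have hT : evalT (Γ m u v - PsiMat M m u v) = 0 := by
      rw [map_sub, hev m u v, evalT_PsiMat M m u v, sub_self]
    have hD : Δab (Γ m u v - PsiMat M m u v) = 0 := by
      rw [Δab_sub, hΔ m u v, delta_PsiMat M m u v, sub_eq_zero]
      refine Finset.sum_congr rfl fun i hi => Finset.sum_congr rfl fun w _ => ?_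
      have him : i < m := Finset.mem_range.mp hi
      rw [IH i him, IH (m-1-i) (by omega)]
    have h0 := kernel_lemma hx hD hT
    exact sub_eq_zero.mp h0

end
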